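/- An assignment χ violates some transitivity constraint if and only if some chord-free simple cycle in G(E,χ) contains exactly one 0-edge. -/

import Mathlib

/-- The list of edges of the cycle determined by vertex list `l = [i₁,…,i_k]`:
successive pairs plus the closing edge `(i_k, i₁)`. -/
def cycEdges (l : List ℕ) : List (ℕ × ℕ) := l.zip (l.rotate 1)

/-- `l` is (the vertex list of) a cycle in the graph `G(E)`. -/
def IsCycle (E : ℕ → ℕ → Prop) (l : List ℕ) : Prop :=
  3 ≤ l.length ∧ ∀ p ∈ cycEdges l, E p.1 p.2

/-- The number of 0-edges of the cycle `l` under the labeling `χ`. -/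
def numZeroEdges (χ : ℕ → ℕ → Bool) (l : List ℕ) : ℕ :=
  ((cycEdges l).filter (fun p => !χ p.1 p.2)).length

/-- The assignment `χ` violates some transitivity constraint
`e_{[i₁,i₂]} ∧ ⋯ ∧ e_{[i_{k-1},i_k]} ⇒ e_{[i₁,i_k]}` over `E`. -/
def ViolatesTrans (E : ℕ → ℕ → Prop) (χ : ℕ → ℕ → Bool) : Prop :=
  ∃ l : List ℕ, 3 ≤ l.length ∧ l.Chain' E ∧
    (∀ p ∈ l.zip l.tail, χ p.1 p.2 = true) ∧
    E (l.headD 0) (l.getLastD 0) ∧ χ (l.headD 0) (l.getLastD 0) = false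

/-- The simple cycle (or acyclic path) `l` has a chord: an edge of `G(E)` joining two
vertices at positions `p < q` that are not adjacent in the cycle. -/
def HasChord (E : ℕ → ℕ → Prop) (l : List ℕ) : Prop :=
  ∃ p q : ℕ, p < q ∧ q < l.length ∧ p + 1 < q ∧ ¬(p = 0 ∧ q = l.length - 1) ∧
    E (l.getD p 0) (l.getD q 0)

/-!
A violated transitivity constraint is a path of 1-edges whose endpoints are joined by a 0-edge;
closing it up gives a cycle whose only 0-edge is the closing one, and conversely any cycle with
exactly one 0-edge can be rotated into this form. A shortest violating path is simple and
chord-free: a repeated vertex can be cut out together with the loop between its occurrences,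
a 1-chord shortcuts the path, and a 0-chord closes up the segment it spans into a shorter
violating path.
-/

namespace List

variable {α : Type*} {R : α → α → Prop}

theorem isChain_iff_forall_mem_zip_tail {l : List α} :
    l.IsChain R ↔ ∀ p ∈ l.zip l.tail, R p.1 p.2 := by
  induction l using twoStepInduction with
  | nil => simp
  | singleton => simp
  | cons_cons a b t _ ih => simp_all

theorem zip_cons_append_singleton (a c : α) (t : List α) :
    (a :: t).zip (t ++ [c]) = (a :: t).zip t ++ [(t.getLastD a, c)] := by
  induction t generalizing a with
  | nil => simp
  | cons b t ih => rw [cons_append, zip_cons_cons, ih, getLastD_cons]; rfl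

theorem exists_eq_append_getElem_cons_append_getElem_cons (l : List α) {i j : ℕ} (hij : i < j)
    (hj : j < l.length) :
    ∃ A B C, l = A ++ l[i] :: (B ++ l[j] :: C) ∧ A.length = i ∧ i + B.length + 1 = j ∧
      j + C.length + 1 = l.length := by
  refine ⟨l.take i, (l.drop (i + 1)).take (j - i - 1), l.drop (j + 1), ?_,
    by simp only [length_take]; omega, by simp only [length_take, length_drop]; omega,
    by simp only [length_drop]; omega⟩
  have hdrop : (l.drop (i + 1)).drop (j - i - 1) = l[j] :: l.drop (j + 1) := by
    rw [drop_drop, show i + 1 + (j - i - 1) = j by omega, drop_eq_getElem_cons hj]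
  rw [← hdrop, take_append_drop, ← drop_eq_getElem_cons, take_append_drop]

theorem IsChain.shortcut {A B C : List α} {x y : α} (h : (A ++ x :: (B ++ y :: C)).IsChain R)
    (hxy : R x y) : (A ++ x :: y :: C).IsChain R := by
  rw [isChain_split, isChain_cons_split] at h
  exact isChain_append_cons_cons.2 ⟨h.1, hxy, h.2.2⟩

theorem IsChain.eraseLoop {A B C : List α} {x : α} (h : (A ++ x :: (B ++ x :: C)).IsChain R) :
    (A ++ x :: C).IsChain R := by
  rw [isChain_split, isChain_cons_split] at h
  exact isChain_split.2 ⟨h.1, h.2.2⟩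

end List

open List

section Cycle

variable {E : ℕ → ℕ → Prop} {χ : ℕ → ℕ → Bool}

theorem cycEdges_rotate (l : List ℕ) (n : ℕ) : cycEdges (l.rotate n) = (cycEdges l).rotate n := by
  rw [cycEdges, cycEdges, zip, zipWith_rotate_distrib _ _ _ _ (length_rotate ..).symm,
    rotate_rotate, rotate_rotate, Nat.add_comm]

theorem cycEdges_eq_zip_tail_append {l : List ℕ} (hl : l ≠ []) :
    cycEdges l = l.zip l.tail ++ [(l.getLastD 0, l.headD 0)] := by
  obtain ⟨a, t, rfl⟩ := exists_cons_of_ne_nil hl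
  rw [cycEdges, rotate_cons_succ, rotate_zero, zip_cons_append_singleton, tail_cons, headD_cons,
    getLastD_cons]

theorem isCycle_rotate (l : List ℕ) (n : ℕ) : IsCycle E (l.rotate n) ↔ IsCycle E l := by
  simp only [IsCycle, cycEdges_rotate, mem_rotate, length_rotate]

theorem numZeroEdges_rotate (l : List ℕ) (n : ℕ) :
    numZeroEdges χ (l.rotate n) = numZeroEdges χ l := by
  rw [numZeroEdges, numZeroEdges, cycEdges_rotate]
  exact ((rotate_perm _ n).filter _).length_eq

theorem isCycle_iff_zip_tail {l : List ℕ} (hl : l ≠ []) :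
    IsCycle E l ↔
      3 ≤ l.length ∧ (∀ p ∈ l.zip l.tail, E p.1 p.2) ∧ E (l.getLastD 0) (l.headD 0) := by
  simp [IsCycle, cycEdges_eq_zip_tail_append hl, or_imp, forall_and]

theorem numZeroEdges_eq_one_iff {l : List ℕ} (hl : l ≠ [])
    (h : χ (l.getLastD 0) (l.headD 0) = false) :
    numZeroEdges χ l = 1 ↔ ∀ p ∈ l.zip l.tail, χ p.1 p.2 = true := by
  rw [numZeroEdges, cycEdges_eq_zip_tail_append hl, filter_append, length_append,
    filter_singleton, h]
  simp [filter_eq_nil_iff]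

theorem exists_rotate_closing_edge_zero {l : List ℕ} (hl : 0 < numZeroEdges χ l) :
    ∃ n, χ ((l.rotate n).getLastD 0) ((l.rotate n).headD 0) = false := by
  obtain ⟨e, he⟩ := exists_mem_of_length_pos hl
  rw [mem_filter, Bool.not_eq_true'] at he
  obtain ⟨P, S, hPS⟩ := append_of_mem he.1
  have hne : l.rotate (P.length + 1) ≠ [] := by
    rw [Ne, rotate_eq_nil_iff]
    rintro rfl
    simp [cycEdges] at he
  have hrot : (P ++ e :: S).rotate (P.length + 1) = S ++ P ++ [e] := by
    simpa using rotate_append_length_eq (P ++ [e]) S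
  have hlast := congrArg getLast? (cycEdges_rotate l (P.length + 1))
  rw [cycEdges_eq_zip_tail_append hne, hPS, hrot, getLast?_concat, getLast?_concat,
    Option.some_inj] at hlast
  exact ⟨_, hlast ▸ he.2⟩

end Cycle

section Violation

variable {E : ℕ → ℕ → Prop} {χ : ℕ → ℕ → Bool}

def OneEdge (E : ℕ → ℕ → Prop) (χ : ℕ → ℕ → Bool) (a b : ℕ) : Prop := E a b ∧ χ a b = true

/-- `ViolatesTrans` without its length condition, which is automatic for irreflexive `E`
(`IsViolation.three_le_length`). -/
def IsViolation (E : ℕ → ℕ → Prop) (χ : ℕ → ℕ → Bool) (l : List ℕ) : Prop :=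
  l.IsChain (OneEdge E χ) ∧ E (l.headD 0) (l.getLastD 0) ∧ χ (l.headD 0) (l.getLastD 0) = false

theorem IsViolation.three_le_length (hirr : ∀ a, ¬ E a a) {l : List ℕ} (h : IsViolation E χ l) :
    3 ≤ l.length := by
  obtain ⟨hc, hE, hχ⟩ := h
  match l, hc with
  | [], _ => exact absurd hE (hirr 0)
  | [a], _ => exact absurd hE (hirr a)
  | [a, b], hc => simp_all [OneEdge]
  | _ :: _ :: _ :: _, _ => simp

theorem violatesTrans_iff (hirr : ∀ a, ¬ E a a) : ViolatesTrans E χ ↔ ∃ l, IsViolation E χ l := by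
  constructor
  · rintro ⟨l, -, hE, hχ, hEe, hχe⟩
    exact ⟨l, isChain_iff_forall_mem_zip_tail.2 fun p hp =>
      ⟨isChain_iff_forall_mem_zip_tail.1 hE p hp, hχ p hp⟩, hEe, hχe⟩
  · rintro ⟨l, hl⟩
    exact ⟨l, hl.three_le_length hirr, hl.1.imp fun _ _ h => h.1,
      fun p hp => (isChain_iff_forall_mem_zip_tail.1 hl.1 p hp).2, hl.2⟩

theorem isViolation_iff_isCycle (hEsym : ∀ ⦃a b⦄, E a b → E b a)
    (hχsym : ∀ a b, χ a b = χ b a) (hirr : ∀ a, ¬ E a a) {l : List ℕ} :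
    IsViolation E χ l ↔
      IsCycle E l ∧ numZeroEdges χ l = 1 ∧ χ (l.getLastD 0) (l.headD 0) = false := by
  constructor
  · intro h
    have h3 := h.three_le_length hirr
    have hl : l ≠ [] := ne_nil_of_length_pos (by omega)
    obtain ⟨hc, hE, hχ⟩ := h
    rw [isChain_iff_forall_mem_zip_tail] at hc
    rw [hχsym] at hχ
    exact ⟨(isCycle_iff_zip_tail hl).2 ⟨h3, fun p hp => (hc p hp).1, hEsym hE⟩,
      (numZeroEdges_eq_one_iff hl hχ).2 fun p hp => (hc p hp).2, hχ⟩
  · rintro ⟨hcyc, hz, hχ⟩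
    have hl : l ≠ [] := ne_nil_of_length_pos (by have := hcyc.1; omega)
    obtain ⟨-, hE, hEe⟩ := (isCycle_iff_zip_tail hl).1 hcyc
    rw [numZeroEdges_eq_one_iff hl hχ] at hz
    exact ⟨isChain_iff_forall_mem_zip_tail.2 fun p hp => ⟨hE p hp, hz p hp⟩, hEsym hEe,
      hχsym .. ▸ hχ⟩

theorem IsViolation.shortcut {A B C : List ℕ} {x y : ℕ}
    (h : IsViolation E χ (A ++ x :: (B ++ y :: C))) (hxy : OneEdge E χ x y) :
    IsViolation E χ (A ++ x :: y :: C) := by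
  obtain ⟨hc, hE, hχ⟩ := h
  exact ⟨hc.shortcut hxy, by simpa [getLast?_cons] using hE, by simpa [getLast?_cons] using hχ⟩

theorem IsViolation.of_zero_chord {A B C : List ℕ} {x y : ℕ}
    (h : IsViolation E χ (A ++ x :: (B ++ y :: C))) (hxy : E x y) (hχ : χ x y = false) :
    IsViolation E χ (x :: (B ++ [y])) :=
  ⟨h.1.infix ⟨A, C, by simp⟩, by simpa [getLast?_cons], by simpa [getLast?_cons]⟩

theorem IsViolation.eraseLoop {A B C : List ℕ} {x : ℕ}
    (h : IsViolation E χ (A ++ x :: (B ++ x :: C))) : IsViolation E χ (A ++ x :: C) := by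
  obtain ⟨hc, hE, hχ⟩ := h
  exact ⟨hc.eraseLoop, by simpa [getLast?_cons] using hE, by simpa [getLast?_cons] using hχ⟩

theorem IsViolation.not_hasChord {l : List ℕ} (h : IsViolation E χ l)
    (hmin : ∀ l', IsViolation E χ l' → l.length ≤ l'.length) : ¬ HasChord E l := by
  rintro ⟨p, q, hpq, hq, hgap, hends, hE⟩
  obtain ⟨A, B, C, hl, hA, hB, hC⟩ := exists_eq_append_getElem_cons_append_getElem_cons l hpq hq
  rw [getD_eq_getElem _ _ (by omega), getD_eq_getElem _ _ hq] at hE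
  rw [hl] at h
  cases hχ : χ l[p] l[q]
  · have hlen := hmin _ (h.of_zero_chord hE hχ)
    simp only [length_append, length_cons, length_nil] at hlen
    omega
  · have hlen := hmin _ (h.shortcut ⟨hE, hχ⟩)
    simp only [length_append, length_cons] at hlen
    omega

theorem IsViolation.nodup {l : List ℕ} (h : IsViolation E χ l)
    (hmin : ∀ l', IsViolation E χ l' → l.length ≤ l'.length) : l.Nodup := by
  rw [Nodup, pairwise_iff_getElem]
  intro i j hi hj hij heq
  obtain ⟨A, B, C, hl, hA, hB, hC⟩ := exists_eq_append_getElem_cons_append_getElem_cons l hij hj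
  rw [hl, ← heq] at h
  have hlen := hmin _ h.eraseLoop
  simp only [length_append, length_cons] at hlen
  omega

end Violation

theorem stmt2 (N : ℕ) (E : ℕ → ℕ → Prop) (χ : ℕ → ℕ → Bool)
    (hEsym : Symmetric E) (hχsym : ∀ i j, χ i j = χ j i)
    (hEdom : ∀ i j, E i j → i < N ∧ j < N ∧ i ≠ j) :
    ViolatesTrans E χ ↔
      ∃ l : List ℕ, IsCycle E l ∧ l.Nodup ∧ ¬ HasChord E l ∧ numZeroEdges χ l = 1 := by
  have hirr : ∀ a, ¬ E a a := fun a h => (hEdom a a h).2.2 rfl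
  rw [violatesTrans_iff hirr]
  constructor
  · rintro ⟨l₀, h₀⟩
    obtain ⟨l, hl, hmin⟩ := (measure length).wf.has_min {l | IsViolation E χ l} ⟨l₀, h₀⟩
    have hmin' : ∀ l', IsViolation E χ l' → l.length ≤ l'.length := fun l' h' =>
      not_lt.1 (hmin l' h')
    obtain ⟨hcyc, hz, -⟩ := (isViolation_iff_isCycle hEsym hχsym hirr).1 hl
    exact ⟨l, hcyc, hl.nodup hmin', hl.not_hasChord hmin', hz⟩
  · rintro ⟨l, hcyc, -, -, hz⟩
    obtain ⟨n, hn⟩ := exists_rotate_closing_edge_zero (hz ▸ Nat.one_pos)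
    exact ⟨l.rotate n, (isViolation_iff_isCycle hEsym hχsym hirr).2
      ⟨(isCycle_rotate l n).2 hcyc, (numZeroEdges_rotate l n).trans hz, hn⟩⟩
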